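/- arXiv:2601.22171 — 5 statements merged into one kernel-verified Lean document; each statement's English description precedes it below -/
import Mathlib

section
/- Let A be a bounded operator on a Hilbert space H and let B be a bounded self-adjoint operator on H. If A·B^q is a compact operator for some real q > 0, then A·B^q is compact for all real q > 0. (Here B^q is defined via the continuous functional calculus on the positive self-adjoint operator B, which may be assumed positive.) -/
/-!
Fix `p > 0` with `A * B ^ p` compact and let `q > 0`. For `δ > 0` the function
`x ↦ x ^ q - x ^ p * max x δ ^ (q - p)` vanishes for `x ≥ δ` and is bounded by `δ ^ q` on
`[0, δ]`, so by the functional calculus `B ^ p * cfc (max · δ ^ (q - p)) B` tends to `B ^ q` in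
norm as `δ → 0⁺`. Multiplying on the left by `A`, the compact operators
`(A * B ^ p) * cfc (max · δ ^ (q - p)) B` converge to `A * B ^ q`, which is therefore compact.
-/

open Filter Topology

lemma abs_rpow_sub_rpow_mul_max_rpow_le {x δ p q : ℝ} (hx : 0 ≤ x) (hδ : 0 < δ)
    (hp : 0 ≤ p) (hq : 0 ≤ q) : |x ^ q - x ^ p * max x δ ^ (q - p)| ≤ δ ^ q := by
  rcases le_or_gt δ x with hδx | hxδ
  · rw [max_eq_left hδx, ← Real.rpow_add (hδ.trans_le hδx), add_sub_cancel, sub_self,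
      abs_zero]
    positivity
  · rw [max_eq_right hxδ.le]
    have hxq : x ^ q ≤ δ ^ q := Real.rpow_le_rpow hx hxδ.le hq
    have hxp : x ^ p * δ ^ (q - p) ≤ δ ^ q :=
      calc x ^ p * δ ^ (q - p) ≤ δ ^ p * δ ^ (q - p) := by gcongr
        _ = δ ^ q := by rw [← Real.rpow_add hδ, add_sub_cancel]
    have : 0 ≤ x ^ q := by positivity
    have : 0 ≤ x ^ p * δ ^ (q - p) := by positivity
    rw [abs_sub_le_iff]
    constructor <;> linarith

section CStarAlgebra

variable {A : Type*} [CStarAlgebra A] [PartialOrder A] [StarOrderedRing A]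

lemma norm_rpow_sub_rpow_mul_cfc_max_rpow_le {a : A} (ha : 0 ≤ a) {δ p q : ℝ} (hδ : 0 < δ)
    (hp : 0 ≤ p) (hq : 0 ≤ q) :
    ‖a ^ q - a ^ p * cfc (fun x : ℝ => max x δ ^ (q - p)) a‖ ≤ δ ^ q := by
  have hmax : Continuous fun x : ℝ => max x δ ^ (q - p) :=
    (continuous_id.max continuous_const).rpow_const fun x =>
      Or.inl (hδ.trans_le (le_max_right x δ)).ne'
  rw [CFC.rpow_eq_cfc_real ha, CFC.rpow_eq_cfc_real ha,
    ← cfc_mul _ _ a (by fun_prop) hmax.continuousOn, ← cfc_sub _ _ a]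
  exact norm_cfc_le (by positivity) fun x hx =>
    abs_rpow_sub_rpow_mul_max_rpow_le (spectrum_nonneg_of_nonneg ha hx) hδ hp hq

lemma tendsto_rpow_mul_cfc_max_rpow {a : A} (ha : 0 ≤ a) {p q : ℝ} (hp : 0 ≤ p) (hq : 0 < q) :
    Tendsto (fun δ : ℝ => a ^ p * cfc (fun x : ℝ => max x δ ^ (q - p)) a) (𝓝[>] 0)
      (𝓝 (a ^ q)) := by
  rw [tendsto_iff_norm_sub_tendsto_zero]
  refine squeeze_zero' (g := fun δ => δ ^ q) (Eventually.of_forall fun _ => norm_nonneg _) ?_ ?_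
  · filter_upwards [self_mem_nhdsWithin] with δ hδ
    rw [norm_sub_rev]
    exact norm_rpow_sub_rpow_mul_cfc_max_rpow_le ha hδ hp hq.le
  · simpa [Real.zero_rpow hq.ne'] using
      (Real.continuousAt_rpow_const 0 q (Or.inr hq.le)).tendsto.mono_left nhdsWithin_le_nhds

end CStarAlgebra

theorem compact_weighted_power_all_of_exists_general
    {H : Type*} [NormedAddCommGroup H] [InnerProductSpace ℂ H] [CompleteSpace H]
    (A B : H →L[ℂ] H) (hBpos : 0 ≤ B)
    (h : ∃ q : ℝ, 0 < q ∧ IsCompactOperator ((A * B ^ q : H →L[ℂ] H) : H → H)) :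
    ∀ q : ℝ, 0 < q → IsCompactOperator ((A * B ^ q : H →L[ℂ] H) : H → H) := by
  obtain ⟨p, hp, hcompact⟩ := h
  intro q hq
  refine isClosed_setOfPred_isCompactOperator.mem_of_tendsto
    ((tendsto_rpow_mul_cfc_max_rpow hBpos hp.le hq).const_mul A) (Eventually.of_forall fun δ => ?_)
  rw [Set.mem_ofPred_eq, ← mul_assoc]
  exact hcompact.comp_clm _

/-- If `A` is a bounded operator and `B` a positive (self-adjoint)
bounded operator on a Hilbert space `H`, and `A * B ^ q` is compact for some real
`q > 0` (powers via the continuous functional calculus), then `A * B ^ q` is compact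
for every real `q > 0`. -/
theorem compact_weighted_power_all_of_exists
    {H : Type*} [NormedAddCommGroup H] [InnerProductSpace ℂ H] [CompleteSpace H]
    (A B : H →L[ℂ] H) (hB : IsSelfAdjoint B) (hBpos : 0 ≤ B)
    (h : ∃ q : ℝ, 0 < q ∧ IsCompactOperator ((A * B ^ q : H →L[ℂ] H) : H → H)) :
    ∀ q : ℝ, 0 < q → IsCompactOperator ((A * B ^ q : H →L[ℂ] H) : H → H) :=
  compact_weighted_power_all_of_exists_general A B hBpos h
end

section
/- Let l range over negative half-integers (l ∈ ½ℤ, l ≤ -½), with ε = 0 if l ∈ ℤ and ε = ½ if 2l is odd, and let m range over integers with m < l - ε, writing m' = m + ε. Then the series ∑_l (-l - ½) ∑_m 1/(-½ l(l+1) + m'(m'+1) + 9/8)^{q/2} converges for q > 3. -/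
open Real

/-! Completing squares, the denominator is `(m' + 1/2)^2 - (l + 1/2)^2 / 2 + 1`, and the constraint
`m' ≤ l - 1` makes it at least `(m' + 1/2)^2 / 2`, hence at least both `n^2 / 8` (where `l = -n/2`)
and `m^2 / 8`. Splitting the exponent as `q/2 = q/3 + q/6` bounds each term by a multiple of
`n^(1 - 2q/3) |m|^(-q/3)`, a product of two convergent p-series when `q > 3`. -/

lemma rpow_neg_add_le_mul_of_le {a b D s t : ℝ} (ha : 0 < a) (hb : 0 < b) (haD : a ≤ D)
    (hbD : b ≤ D) (hs : 0 ≤ s) (ht : 0 ≤ t) :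
    D ^ (-(s + t)) ≤ a ^ (-s) * b ^ (-t) := by
  rw [neg_add, rpow_add (ha.trans_le haD)]
  exact mul_le_mul (rpow_le_rpow_of_nonpos ha haD (by linarith))
    (rpow_le_rpow_of_nonpos hb hbD (by linarith)) (rpow_nonneg (hb.le.trans hbD) _)
    (rpow_nonneg ha.le _)

lemma sq_div_rpow_neg {c : ℝ} (hc : 0 < c) (u s : ℝ) :
    (u ^ 2 / c) ^ (-s) = c ^ s * |u| ^ (-(2 * s)) := by
  rw [← sq_abs, div_rpow (by positivity) hc.le, ← rpow_natCast, ← rpow_mul (abs_nonneg u),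
    rpow_neg hc.le, div_eq_mul_inv, inv_inv, mul_comm]
  push_cast
  ring_nf

/-- `m + ε + n/2` is an integer, so the strict bound on `m` gains a full unit. -/
lemma int_add_parity_shift_le {n : ℕ} {m : ℤ}
    (hm : (m : ℝ) < -(n : ℝ) / 2 - (if Even n then 0 else 1 / 2)) :
    (m : ℝ) + (if Even n then 0 else 1 / 2) ≤ -(n : ℝ) / 2 - 1 := by
  obtain ⟨k, rfl | rfl⟩ := Nat.even_or_odd' n
  · simp only [Nat.cast_mul, Nat.cast_ofNat, even_two, Even.mul_right, ↓reduceIte, sub_zero,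
      add_zero] at hm ⊢
    have hk : m < -(k : ℤ) := by exact_mod_cast (by linarith : (m : ℝ) < -(k : ℝ))
    have : (m : ℝ) ≤ -(k : ℝ) - 1 := by exact_mod_cast (by omega : m ≤ -(k : ℤ) - 1)
    linarith
  · have hodd : ¬ Even (2 * k + 1) := by simp
    simp only [hodd, if_false, Nat.cast_add, Nat.cast_mul, Nat.cast_ofNat, Nat.cast_one]
      at hm ⊢
    have hk : m < -(k : ℤ) - 1 := by exact_mod_cast (by linarith : (m : ℝ) < -(k : ℝ) - 1)
    have : (m : ℝ) ≤ -(k : ℝ) - 2 := by exact_mod_cast (by omega : m ≤ -(k : ℤ) - 2)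
    linarith

noncomputable def discreteSeriesDenom (l x : ℝ) : ℝ :=
  -(1 / 2) * l * (l + 1) + x * (x + 1) + 9 / 8

lemma sq_add_half_div_two_le_discreteSeriesDenom {l x : ℝ} (hl : l ≤ 0) (hx : x ≤ l - 1) :
    (x + 1 / 2) ^ 2 / 2 ≤ discreteSeriesDenom l x := by
  unfold discreteSeriesDenom
  nlinarith [mul_nonneg (by linarith : 0 ≤ l - x) (by linarith : 0 ≤ -(x + l + 1))]

section

variable {n m x : ℝ} (hn : 1 ≤ n) (hx : x ≤ -n / 2 - 1)
include hn hx

lemma sq_div_eight_le_discreteSeriesDenom : n ^ 2 / 8 ≤ discreteSeriesDenom (-n / 2) x := by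
  refine le_trans ?_ (sq_add_half_div_two_le_discreteSeriesDenom (by linarith) hx)
  nlinarith

lemma discreteSeriesDenom_pos : 0 < discreteSeriesDenom (-n / 2) x :=
  lt_of_lt_of_le (by positivity) (sq_div_eight_le_discreteSeriesDenom hn hx)

lemma int_sq_div_eight_le_discreteSeriesDenom (hmx : m ≤ x) (hxm : x ≤ m + 1 / 2) :
    m ^ 2 / 8 ≤ discreteSeriesDenom (-n / 2) x := by
  refine le_trans ?_ (sq_add_half_div_two_le_discreteSeriesDenom (by linarith) hx)
  nlinarith [mul_nonneg (by linarith : 0 ≤ m / 2 - (x + 1 / 2))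
    (by linarith : 0 ≤ -(x + 1 / 2) - m / 2)]

lemma discreteSeries_term_nonneg (q : ℝ) :
    0 ≤ (-(-n / 2) - 1 / 2) * (1 / discreteSeriesDenom (-n / 2) x ^ (q / 2)) :=
  mul_nonneg (by linarith)
    (one_div_nonneg.mpr (rpow_nonneg (discreteSeriesDenom_pos hn hx).le _))

lemma discreteSeries_term_le {q : ℝ} (hq : 0 ≤ q) (hmx : m ≤ x) (hxm : x ≤ m + 1 / 2) :
    (-(-n / 2) - 1 / 2) * (1 / discreteSeriesDenom (-n / 2) x ^ (q / 2)) ≤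
      8 ^ (q / 2) * (n ^ (1 - 2 * q / 3) * |m| ^ (-(q / 3))) := by
  have hm0 : m ≠ 0 := by linarith
  calc (-(-n / 2) - 1 / 2) * (1 / discreteSeriesDenom (-n / 2) x ^ (q / 2))
      ≤ n * discreteSeriesDenom (-n / 2) x ^ (-(q / 3 + q / 6)) := by
        rw [one_div (discreteSeriesDenom _ _ ^ _), ← rpow_neg (discreteSeriesDenom_pos hn hx).le,
          show -(q / 2) = -(q / 3 + q / 6) by ring]
        exact mul_le_mul_of_nonneg_right (by linarith)
          (rpow_nonneg (discreteSeriesDenom_pos hn hx).le _)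
    _ ≤ n * ((n ^ 2 / 8) ^ (-(q / 3)) * (m ^ 2 / 8) ^ (-(q / 6))) := by
        gcongr
        exact rpow_neg_add_le_mul_of_le (by positivity) (by positivity)
          (sq_div_eight_le_discreteSeriesDenom hn hx)
          (int_sq_div_eight_le_discreteSeriesDenom hn hx hmx hxm) (by positivity) (by positivity)
    _ = 8 ^ (q / 2) * (n ^ (1 - 2 * q / 3) * |m| ^ (-(q / 3))) := by
        rw [sq_div_rpow_neg (by norm_num), sq_div_rpow_neg (by norm_num),
          abs_of_pos (by linarith : 0 < n), show q / 2 = q / 3 + q / 6 by ring,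
          rpow_add (by norm_num), show 1 - 2 * q / 3 = 1 + -(2 * (q / 3)) by ring,
          rpow_add (by linarith), rpow_one, show -(q / 3) = -(2 * (q / 6)) by ring]
        ring

end

/-- With `l` ranging over negative half-integers (parametrized by
`n : ℕ+` via `l = -n/2`), `ε = 0` if `l ∈ ℤ` and `ε = 1/2` if `2l` is odd, and `m`
ranging over integers with `m < l - ε` (writing `m' = m + ε`), the series
`∑_l (-l - 1/2) ∑_m (-(1/2) l(l+1) + m'(m'+1) + 9/8)^(-q/2)` converges for `q > 3`. -/
theorem negative_discrete_series_summable (q : ℝ) (hq : 3 < q) :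
    Summable (fun p : Σ n : ℕ+, {m : ℤ //
        (m : ℝ) < -(n : ℝ) / 2 - (if Even (n : ℕ) then (0 : ℝ) else 1 / 2)} =>
      let l : ℝ := -(p.1 : ℝ) / 2
      let ε : ℝ := if Even (p.1 : ℕ) then 0 else 1 / 2
      let m' : ℝ := (p.2 : ℤ) + ε
      (-l - 1 / 2) * (1 / (-(1 / 2) * l * (l + 1) + m' * (m' + 1) + 9 / 8) ^ (q / 2))) := by
  have hmajorant : Summable fun p : ℕ+ × ℤ =>
      8 ^ (q / 2) * (((p.1 : ℕ) : ℝ) ^ (1 - 2 * q / 3) * |(p.2 : ℝ)| ^ (-(q / 3))) :=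
    (((summable_nat_rpow.mpr (by linarith)).comp_injective PNat.coe_injective).mul_of_nonneg
      (summable_abs_int_rpow (by linarith)) (fun _ => rpow_nonneg (Nat.cast_nonneg _) _)
      (fun _ => by positivity)).mul_left _
  have hε : ∀ n : ℕ, (0 : ℝ) ≤ (if Even n then 0 else 1 / 2) ∧
      (if Even n then (0 : ℝ) else 1 / 2) ≤ 1 / 2 := fun n => by split_ifs <;> norm_num
  refine Summable.of_nonneg_of_le (fun ⟨n, m, hm⟩ => ?_) (fun ⟨n, m, hm⟩ => ?_)
    (hmajorant.comp_injective
      (Subtype.val_injective.comp (Equiv.subtypeProdEquivSigmaSubtype _).symm.injective))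
  · exact discreteSeries_term_nonneg (Nat.one_le_cast.mpr n.pos) (int_add_parity_shift_le hm) q
  · exact discreteSeries_term_le (m := m) (Nat.one_le_cast.mpr n.pos) (int_add_parity_shift_le hm)
      (by linarith) (le_add_of_nonneg_right (hε n).1) (by linarith [(hε n).2])
end

section
/- Let l range over negative half-integers (l ∈ ½ℤ, l ≤ -½), with ε = 0 if l ∈ ℤ and ε = ½ if 2l is odd, and let m range over integers with m ≥ -l - ε, writing m' = m + ε. Then the series ∑_l (-l - ½) ∑_m 1/(-½ l(l+1) + m'(m'+1) + 9/8)^{q/2} converges for q > 3. -/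
/-!
Writing `l = -n/2` and `m' = m + ε`, the constraint `m ≥ -l - ε` says `m' ≥ -l`, so the
denominator is at least `m'²/2` and the prefactor `-l - 1/2` at most `m'`. Each term is therefore
`O((2m')^{1-q})`, and `2m'` dominates both `n` and `m + 1/2`; splitting `1 - q = -2s` with
`s = (q-1)/2 > 1` bounds the double series by the product of two convergent `p`-series
`∑ n^{-s}` and `∑ |m + 1/2|^{-s}`.
-/

open Real

noncomputable def discreteSeriesTerm (q l x : ℝ) : ℝ :=
  (-l - 1 / 2) * (1 / discreteSeriesDenom l x ^ (q / 2))

lemma sq_div_two_le_discreteSeriesDenom {l x : ℝ} (hl : l ≤ 0) (hx : -l ≤ x) :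
    x ^ 2 / 2 ≤ discreteSeriesDenom l x := by
  unfold discreteSeriesDenom
  nlinarith

lemma discreteSeriesTerm_nonneg {q l x : ℝ} (hl : l ≤ -1 / 2) (hx : -l ≤ x) :
    0 ≤ discreteSeriesTerm q l x := by
  have hD : 0 ≤ discreteSeriesDenom l x :=
    (sq_div_two_le_discreteSeriesDenom (by linarith) hx).trans' (by positivity)
  exact mul_nonneg (by linarith) (one_div_nonneg.2 (rpow_nonneg hD _))

lemma discreteSeriesTerm_le {q l x : ℝ} (hq : 0 ≤ q) (hl : l ≤ -1 / 2) (hx : -l ≤ x) :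
    discreteSeriesTerm q l x ≤ 8 ^ (q / 2) / (2 * x) ^ (q - 1) := by
  have hx0 : 0 < x := by linarith
  have hD : (2 * x) ^ 2 / 8 ≤ discreteSeriesDenom l x := by
    linarith [sq_div_two_le_discreteSeriesDenom (by linarith) hx]
  have hD0 : 0 < discreteSeriesDenom l x := hD.trans_lt' (by positivity)
  have hpow : ((2 * x) ^ 2 / 8) ^ (q / 2) = (2 * x) ^ q / 8 ^ (q / 2) := by
    rw [div_rpow (by positivity) (by norm_num), ← rpow_natCast, ← rpow_mul (by positivity)]
    congr 2
    ring
  calc discreteSeriesTerm q l x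
      ≤ (2 * x) * (1 / ((2 * x) ^ 2 / 8) ^ (q / 2)) := by
        unfold discreteSeriesTerm
        gcongr
        linarith
    _ = 8 ^ (q / 2) / (2 * x) ^ (q - 1) := by
        rw [hpow, rpow_sub_one (by positivity)]
        field_simp

lemma one_div_rpow_two_mul_le {a b y s : ℝ} (ha : 0 < a) (hb : 0 < b) (hay : a ≤ y)
    (hby : b ≤ y) (hs : 0 ≤ s) : 1 / y ^ (2 * s) ≤ 1 / a ^ s * (1 / b ^ s) := by
  rw [mul_comm 2 s, rpow_mul (by linarith), rpow_two, pow_two, one_div_mul_one_div]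
  have hy : 0 ≤ y ^ s := rpow_nonneg (ha.le.trans hay) s
  gcongr

lemma discreteSeriesTerm_le_mul {q n m ε : ℝ} (hq : 1 ≤ q) (hn : 1 ≤ n) (hε₀ : 0 ≤ ε)
    (hε : ε ≤ 1 / 2) (hm : n / 2 - ε ≤ m) :
    discreteSeriesTerm q (-n / 2) (m + ε)
      ≤ 8 ^ (q / 2) * (1 / n ^ ((q - 1) / 2) * (1 / |m + 1 / 2| ^ ((q - 1) / 2))) := by
  have hm' : |m + 1 / 2| = m + 1 / 2 := abs_of_nonneg (by linarith)
  calc discreteSeriesTerm q (-n / 2) (m + ε)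
      ≤ 8 ^ (q / 2) / (2 * (m + ε)) ^ (q - 1) :=
        discreteSeriesTerm_le (by linarith) (by linarith) (by linarith)
    _ = 8 ^ (q / 2) * (1 / (2 * (m + ε)) ^ (2 * ((q - 1) / 2))) := by
        rw [mul_div_cancel₀ _ two_ne_zero, mul_one_div]
    _ ≤ 8 ^ (q / 2) * (1 / n ^ ((q - 1) / 2) * (1 / |m + 1 / 2| ^ ((q - 1) / 2))) := by
        gcongr
        rw [hm']
        exact one_div_rpow_two_mul_le (by linarith) (by linarith) (by linarith) (by linarith)
          (by linarith)

/-- With `l` ranging over negative half-integers (parametrized by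
`n : ℕ+` via `l = -n/2`), `ε = 0` if `l ∈ ℤ` and `ε = 1/2` if `2l` is odd, and `m`
ranging over integers with `m ≥ -l - ε` (writing `m' = m + ε`), the series
`∑_l (-l - 1/2) ∑_m (-(1/2) l(l+1) + m'(m'+1) + 9/8)^(-q/2)` converges for `q > 3`. -/
theorem positive_discrete_series_summable (q : ℝ) (hq : 3 < q) :
    Summable (fun p : Σ n : ℕ+, {m : ℤ //
        (m : ℝ) ≥ (n : ℝ) / 2 - (if Even (n : ℕ) then (0 : ℝ) else 1 / 2)} =>
      let l : ℝ := -(p.1 : ℝ) / 2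
      let ε : ℝ := if Even (p.1 : ℕ) then 0 else 1 / 2
      let m' : ℝ := (p.2 : ℤ) + ε
      (-l - 1 / 2) * (1 / (-(1 / 2) * l * (l + 1) + m' * (m' + 1) + 9 / 8) ^ (q / 2))) := by
  have hs : 1 < (q - 1) / 2 := by linarith
  have hsumN : Summable (fun n : ℕ+ => 1 / ((n : ℕ) : ℝ) ^ ((q - 1) / 2)) :=
    (summable_one_div_nat_rpow.2 hs).comp_injective PNat.coe_injective
  have hsumM : Summable (fun m : ℤ => 1 / |(m : ℝ) + 1 / 2| ^ ((q - 1) / 2)) :=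
    (summable_one_div_int_add_rpow _ _).2 hs
  have hdom := (hsumN.mul_of_nonneg hsumM (fun _ => by positivity) fun _ => by positivity).mul_left
    (8 ^ (q / 2))
  -- the index set embeds in `ℕ+ × ℤ` via `⟨n, m, _⟩ ↦ (n, m)`
  refine .of_nonneg_of_le (fun ⟨n, m, hm⟩ => ?_) (fun ⟨n, m, hm⟩ => ?_) (hdom.comp_injective
    (Subtype.val_injective.comp (Equiv.subtypeProdEquivSigmaSubtype _).symm.injective))
  all_goals
    have hn1 : (1 : ℝ) ≤ ((n : ℕ) : ℝ) := Nat.one_le_cast.2 n.pos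
    have hε : (0 : ℝ) ≤ (if Even (n : ℕ) then 0 else 1 / 2) ∧
        (if Even (n : ℕ) then (0 : ℝ) else 1 / 2) ≤ 1 / 2 := by
      split_ifs <;> norm_num
  · exact discreteSeriesTerm_nonneg (by linarith) (by linarith)
  · exact discreteSeriesTerm_le_mul (by linarith) hn1 hε.1 hε.2 (by linarith)
end

section
/- Let T be a symmetric densely defined operator on a Hilbert space H such that dom(T²) is dense. If T² is essentially self-adjoint on dom(T²), then T is essentially self-adjoint. -/
/-!
The closure `A` of `T` is closed and symmetric, and `A† = T†`. A closed symmetric operator is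
self-adjoint as soon as `A†` has no eigenvector for the eigenvalues `±i`: the pythagorean identity
`‖A x + i x‖² = ‖A x‖² + ‖x‖²` makes the range of `A + i` closed, the missing eigenvector for `i`
makes it dense, and the missing eigenvector for `-i` then forces `A† ≤ A`.

If `T† u = c u` with `c² = -1`, then `⟪u, T (T x)⟫ = c̄² ⟪u, x⟫ = -⟪u, x⟫` for `x ∈ dom T²`, so `u`
is an eigenvector of `(T²)†` for `-1`. But `(T²)†` is the closure of `T²`, which is nonnegative
because `⟪x, T (T x)⟫ = ‖T x‖²`; hence `u = 0`.
-/

open scoped InnerProductSpace ComplexConjugate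
open LinearPMap

namespace LinearPMap

theorem dense_closure_domain {R E F : Type*} [CommRing R] [AddCommGroup E] [AddCommGroup F]
    [Module R E] [Module R F] [TopologicalSpace R] [TopologicalSpace E] [TopologicalSpace F]
    [ContinuousAdd E] [ContinuousAdd F] [ContinuousSMul R E] [ContinuousSMul R F] {T : E →ₗ.[R] F}
    (hT : Dense (T.domain : Set E)) : Dense (T.closure.domain : Set E) :=
  hT.mono fun _ hx => T.le_closure.1 hx

section RCLike

variable {𝕜 E F : Type*} [RCLike 𝕜] [NormedAddCommGroup E] [InnerProductSpace 𝕜 E]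
  [NormedAddCommGroup F] [InnerProductSpace 𝕜 F]

theorem _root_.Submodule.adjoint_topologicalClosure (g : Submodule 𝕜 (E × F)) :
    g.topologicalClosure.adjoint = g.adjoint := by
  ext x
  simp only [Submodule.mem_adjoint_iff]
  refine ⟨fun h a b hab => h a b (g.le_topologicalClosure hab), fun h a b hab => ?_⟩
  have hclosed : _root_.IsClosed {p : E × F | ⟪p.2, x.1⟫_𝕜 - ⟪p.1, x.2⟫_𝕜 = 0} :=
    isClosed_eq (by fun_prop) continuous_const
  rw [← SetLike.mem_coe, Submodule.topologicalClosure_coe] at hab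
  exact closure_minimal (fun p hp => h p.1 p.2 hp) hclosed hab

theorem IsClosable.re_inner_closure_apply_self_nonneg {T : E →ₗ.[𝕜] E} (hc : T.IsClosable)
    (h : ∀ x : T.domain, 0 ≤ RCLike.re ⟪(x : E), T x⟫_𝕜) (x : T.closure.domain) :
    0 ≤ RCLike.re ⟪(x : E), T.closure x⟫_𝕜 := by
  have hclosed : _root_.IsClosed {p : E × E | 0 ≤ RCLike.re ⟪p.1, p.2⟫_𝕜} :=
    isClosed_le continuous_const (by fun_prop)
  have hgraph : (T.graph : Set (E × E)) ⊆ {p | 0 ≤ RCLike.re ⟪p.1, p.2⟫_𝕜} := by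
    rintro ⟨a, b⟩ hp
    obtain ⟨y, rfl, rfl⟩ := (mem_graph_iff T).1 hp
    exact h y
  have hx := T.closure.mem_graph x
  rw [← hc.graph_closure_eq_closure_graph, ← SetLike.mem_coe,
    Submodule.topologicalClosure_coe] at hx
  exact closure_minimal hgraph hclosed hx

variable [CompleteSpace E]

theorem IsClosable.adjoint_closure {T : E →ₗ.[𝕜] F} (hc : T.IsClosable)
    (hT : Dense (T.domain : Set E)) : T.closure† = T† := by
  apply eq_of_eq_graph
  rw [adjoint_graph_eq_graph_adjoint (dense_closure_domain hT), adjoint_graph_eq_graph_adjoint hT,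
    ← hc.graph_closure_eq_closure_graph, Submodule.adjoint_topologicalClosure]

theorem IsFormalAdjoint.isClosable {T : E →ₗ.[𝕜] F} {S : F →ₗ.[𝕜] E} (h : T.IsFormalAdjoint S)
    (hT : Dense (T.domain : Set E)) : S.IsClosable :=
  (adjoint_isClosed hT).isClosable.leIsClosable (h.le_adjoint hT)

theorem isFormalAdjoint_self_of_le_adjoint {A : E →ₗ.[𝕜] E} (hA : Dense (A.domain : Set E))
    (h : A ≤ A†) : A.IsFormalAdjoint A := fun x y => by
  rw [h.2 (x := x) (y := ⟨x, h.1 x.2⟩) rfl]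
  exact adjoint_isFormalAdjoint hA _ y

theorem IsFormalAdjoint.closure {T : E →ₗ.[𝕜] E} (h : T.IsFormalAdjoint T)
    (hT : Dense (T.domain : Set E)) : T.closure.IsFormalAdjoint T.closure := by
  have hc := h.isClosable hT
  refine isFormalAdjoint_self_of_le_adjoint (dense_closure_domain hT) ?_
  rw [hc.adjoint_closure hT]
  refine le_of_le_graph ?_
  rw [← hc.graph_closure_eq_closure_graph]
  exact Submodule.topologicalClosure_minimal _ (le_graph_of_le (h.le_adjoint hT))
    (adjoint_isClosed hT)

end RCLike

section Complex

variable {H : Type*} [NormedAddCommGroup H] [InnerProductSpace ℂ H] {A : H →ₗ.[ℂ] H}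

open Complex

theorem IsFormalAdjoint.norm_apply_add_I_smul_sq (h : A.IsFormalAdjoint A) (x : A.domain) :
    ‖(A x : H) + I • (x : H)‖ ^ 2 = ‖(A x : H)‖ ^ 2 + ‖(x : H)‖ ^ 2 := by
  have hreal : conj ⟪(A x : H), x⟫_ℂ = ⟪(A x : H), x⟫_ℂ := by rw [inner_conj_symm, h x x]
  have hcross : RCLike.re (I * ⟪(A x : H), x⟫_ℂ) = 0 := by
    simp [Complex.conj_eq_iff_im.mp hreal]
  rw [@norm_add_sq ℂ, inner_smul_right, hcross, norm_smul, norm_I, one_mul]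
  ring

variable [CompleteSpace H]

theorem IsClosed.isClosed_map_graph_snd_add_I_smul_fst (hA : A.IsClosed) (h : A.IsFormalAdjoint A) :
    _root_.IsClosed (A.graph.map (LinearMap.snd ℂ H H + I • LinearMap.fst ℂ H H) : Set H) := by
  set L : H × H →L[ℂ] H := ContinuousLinearMap.snd ℂ H H + I • ContinuousLinearMap.fst ℂ H H
  have : CompleteSpace A.graph := hA.completeSpace_coe
  have hbound : ∀ p : A.graph, ‖p‖ ≤ ((1 : NNReal) : ℝ) * ‖L.comp A.graph.subtypeL p‖ := by
    rintro ⟨⟨a, b⟩, hp⟩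
    obtain ⟨x, rfl, rfl⟩ := (mem_graph_iff A).1 hp
    have := h.norm_apply_add_I_smul_sq x
    rw [NNReal.coe_one, one_mul, Submodule.coe_norm, Prod.norm_def, max_le_iff]
    simp only [L, ContinuousLinearMap.add_comp, ContinuousLinearMap.smul_comp, _root_.add_apply,
      ContinuousLinearMap.comp_apply, Submodule.coe_subtypeL, Submodule.subtype_apply,
      ContinuousLinearMap.coe_snd', _root_.smul_apply, ContinuousLinearMap.coe_fst']
    rw [← sq_le_sq₀ (norm_nonneg _) (norm_nonneg _), ← sq_le_sq₀ (norm_nonneg _) (norm_nonneg _),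
      this]
    exact ⟨le_add_of_nonneg_left (sq_nonneg _), le_add_of_nonneg_right (sq_nonneg _)⟩
  have hrange := (AddMonoidHomClass.antilipschitz_of_bound (L.comp A.graph.subtypeL)
    hbound).isClosed_range (L.comp A.graph.subtypeL).uniformContinuous
  convert hrange using 1
  ext y
  simp [L]

theorem IsClosed.exists_apply_add_I_smul_eq (hA : A.IsClosed) (hA_dense : Dense (A.domain : Set H))
    (h : A.IsFormalAdjoint A) (hI : ∀ u : A†.domain, A† u = I • (u : H) → (u : H) = 0) (y : H) :
    ∃ x : A.domain, (A x : H) + I • (x : H) = y := by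
  set K := A.graph.map (LinearMap.snd ℂ H H + I • LinearMap.fst ℂ H H)
  have hK_orth : Kᗮ = ⊥ := by
    refine (Submodule.eq_bot_iff _).2 fun u hu => ?_
    have hadj : ∀ x : A.domain, ⟪I • u, (x : H)⟫_ℂ = ⟪u, (A x : H)⟫_ℂ := fun x => by
      have h0 : ⟪(A x : H) + I • (x : H), u⟫_ℂ = 0 :=
        (Submodule.mem_orthogonal _ _).1 hu _ ⟨_, A.mem_graph x, rfl⟩
      rw [inner_add_left, inner_smul_left] at h0
      rw [← inner_conj_symm u, inner_smul_left, eq_neg_of_add_eq_zero_left h0]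
      simp [inner_conj_symm]
    exact hI ⟨u, mem_adjoint_domain_of_exists _ ⟨_, hadj⟩⟩ (adjoint_apply_eq hA_dense _ hadj)
  have hK_closed : _root_.IsClosed (K : Set H) := hA.isClosed_map_graph_snd_add_I_smul_fst h
  have hK : K = ⊤ := by
    rw [← hK_closed.submodule_topologicalClosure_eq,
      Submodule.topologicalClosure_eq_top_iff, hK_orth]
  obtain ⟨⟨a, b⟩, hp, rfl⟩ := hK ▸ Submodule.mem_top (x := y)
  obtain ⟨x, rfl, rfl⟩ := (mem_graph_iff A).1 hp
  exact ⟨x, rfl⟩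

theorem IsClosed.isSelfAdjoint_of_adjoint_eigenvectors_I_eq_zero (hA : A.IsClosed)
    (hA_dense : Dense (A.domain : Set H)) (h : A.IsFormalAdjoint A)
    (hI : ∀ u : A†.domain, A† u = I • (u : H) → (u : H) = 0)
    (hnegI : ∀ u : A†.domain, A† u = -I • (u : H) → (u : H) = 0) : IsSelfAdjoint A := by
  have hle : A ≤ A† := h.le_adjoint hA_dense
  refine isSelfAdjoint_def.2 (le_antisymm (le_of_le_graph ?_) hle)
  rintro ⟨a, b⟩ hp
  obtain ⟨y, rfl, rfl⟩ := (mem_graph_iff _).1 hp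
  obtain ⟨x, hx⟩ := hA.exists_apply_add_I_smul_eq hA_dense h hI (A† y + I • (y : H))
  set x' : A†.domain := ⟨x, hle.1 x.2⟩
  have hAx : A† x' = A x := (hle.2 rfl).symm
  have hyx : (y : H) = x := sub_eq_zero.1 <| hnegI (y - x') <| by
    rw [map_sub, hAx, Submodule.coe_sub, eq_sub_of_add_eq hx]
    module
  exact (mem_graph_iff A).2 ⟨x, hyx.symm, by
    rw [← hAx]; exact congrArg (fun z => (A† z : H)) (Subtype.ext hyx.symm)⟩

end Complex

section Square

variable {𝕜 E : Type*} [RCLike 𝕜] [NormedAddCommGroup E] [InnerProductSpace 𝕜 E]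
  {T S : E →ₗ.[𝕜] E}
  (hS : ∀ x : S.domain, ∃ (hx : (x : E) ∈ T.domain) (hTx : (T ⟨x, hx⟩ : E) ∈ T.domain),
    S x = T ⟨T ⟨x, hx⟩, hTx⟩)
include hS

theorem IsFormalAdjoint.of_le_sq (hT : T.IsFormalAdjoint T) : S.IsFormalAdjoint S := fun x y => by
  obtain ⟨hx, hTx, hSx⟩ := hS x
  obtain ⟨hy, hTy, hSy⟩ := hS y
  rw [hSx, hSy]
  exact (hT ⟨_, hTx⟩ ⟨y, hy⟩).trans (hT ⟨x, hx⟩ ⟨_, hTy⟩)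

theorem IsFormalAdjoint.re_inner_self_apply_nonneg_of_le_sq (hT : T.IsFormalAdjoint T)
    (x : S.domain) : 0 ≤ RCLike.re ⟪(x : E), S x⟫_𝕜 := by
  obtain ⟨hx, hTx, hSx⟩ := hS x
  rw [hSx, ← hT ⟨x, hx⟩ ⟨_, hTx⟩]
  exact inner_self_nonneg

variable [CompleteSpace E]

theorem exists_adjoint_apply_eq_neg_of_le_sq (hT : Dense (T.domain : Set E))
    (hS_dense : Dense (S.domain : Set E)) {c : 𝕜} (hc : c ^ 2 = -1) (u : T†.domain)
    (hu : T† u = c • (u : E)) : ∃ hu' : (u : E) ∈ S†.domain, S† ⟨u, hu'⟩ = -(u : E) := by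
  have hpair : ∀ (z : E) (hz : z ∈ T.domain), ⟪(u : E), T ⟨z, hz⟩⟫_𝕜 = conj c * ⟪(u : E), z⟫_𝕜 :=
    fun z hz => by rw [← adjoint_isFormalAdjoint hT u ⟨z, hz⟩, hu, inner_smul_left]
  have hadj : ∀ x : S.domain, ⟪-(u : E), (x : E)⟫_𝕜 = ⟪(u : E), S x⟫_𝕜 := fun x => by
    obtain ⟨hx, hTx, hSx⟩ := hS x
    rw [hSx, hpair _ hTx, hpair _ hx, ← mul_assoc, ← map_mul, ← sq, hc, inner_neg_left]
    simp
  exact ⟨mem_adjoint_domain_of_exists _ ⟨_, hadj⟩, adjoint_apply_eq hS_dense _ hadj⟩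

theorem eq_zero_of_adjoint_apply_eq_smul_of_le_sq (hT_symm : T.IsFormalAdjoint T)
    (hT : Dense (T.domain : Set E)) (hS_dense : Dense (S.domain : Set E))
    (hS_sa : IsSelfAdjoint S.closure) {c : 𝕜} (hc : c ^ 2 = -1) (u : T†.domain)
    (hu : T† u = c • (u : E)) : (u : E) = 0 := by
  have hS_closable := (hT_symm.of_le_sq hS).isClosable hS_dense
  have hS_adj : S† = S.closure := by
    rw [← hS_closable.adjoint_closure hS_dense, isSelfAdjoint_def.1 hS_sa]
  have hnonneg : ∀ x : S†.domain, 0 ≤ RCLike.re ⟪(x : E), S† x⟫_𝕜 := by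
    rw [hS_adj]
    exact hS_closable.re_inner_closure_apply_self_nonneg
      (hT_symm.re_inner_self_apply_nonneg_of_le_sq hS)
  obtain ⟨hu', hSu⟩ := exists_adjoint_apply_eq_neg_of_le_sq hS hT hS_dense hc u hu
  have := hnonneg ⟨u, hu'⟩
  rw [hSu, inner_neg_right, _root_.map_neg, neg_nonneg] at this
  exact re_inner_self_nonpos.1 this

end Square

end LinearPMap

/-- Reed–Simon, Problem X.28. Let `T` be a symmetric densely defined
operator on a Hilbert space `H` such that the domain of `T²` is dense. If `T²` is
essentially self-adjoint on its domain, then `T` is essentially self-adjoint.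
Here `S` plays the role of `T²`: its domain is `{x ∈ dom T | Tx ∈ dom T}` and it acts
by `S x = T (T x)`; essential self-adjointness of an operator means that its closure
is self-adjoint. -/
theorem essSelfAdjoint_of_sq_essSelfAdjoint
    {H : Type*} [NormedAddCommGroup H] [InnerProductSpace ℂ H] [CompleteSpace H]
    (T S : H →ₗ.[ℂ] H)
    (hT_dense : Dense (T.domain : Set H))
    (hsymm : ∀ x y : T.domain, ⟪T x, (y : H)⟫_ℂ = ⟪(x : H), T y⟫_ℂ)
    (hSdom : ∀ x : H, x ∈ S.domain ↔ ∃ hx : x ∈ T.domain, (T ⟨x, hx⟩ : H) ∈ T.domain)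
    (hSapp : ∀ (x : S.domain) (hx : (x : H) ∈ T.domain)
      (hTx : (T ⟨(x : H), hx⟩ : H) ∈ T.domain), S x = T ⟨T ⟨(x : H), hx⟩, hTx⟩)
    (hS_dense : Dense (S.domain : Set H))
    (hS_essa : IsSelfAdjoint S.closure) :
    IsSelfAdjoint T.closure := by
  have hT_symm : T.IsFormalAdjoint T := hsymm
  have hS : ∀ x : S.domain, ∃ (hx : (x : H) ∈ T.domain) (hTx : (T ⟨x, hx⟩ : H) ∈ T.domain),
      S x = T ⟨T ⟨x, hx⟩, hTx⟩ := fun x =>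
    let ⟨hx, hTx⟩ := (hSdom x).1 x.2
    ⟨hx, hTx, hSapp x hx hTx⟩
  have hT_closable := hT_symm.isClosable hT_dense
  have hno_eigenvector : ∀ c : ℂ, c ^ 2 = -1 →
      ∀ u : T.closure†.domain, T.closure† u = c • (u : H) → (u : H) = 0 := by
    rw [hT_closable.adjoint_closure hT_dense]
    exact fun c hc => eq_zero_of_adjoint_apply_eq_smul_of_le_sq hS hT_symm hT_dense hS_dense
      hS_essa hc
  exact hT_closable.closure_isClosed.isSelfAdjoint_of_adjoint_eigenvectors_I_eq_zero
    (dense_closure_domain hT_dense) (hT_symm.closure hT_dense)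
    (hno_eigenvector Complex.I Complex.I_sq)
    (hno_eigenvector (-Complex.I) (by rw [neg_sq, Complex.I_sq]))
end

section
/- Suppose T : dom T ⊆ H → H is densely defined and closable with closure D, and suppose a ∈ B(H) preserves dom T and there exists a bounded operator S ∈ B(H) with T(a·v) = a·(T v) + S·v for all v ∈ dom T. Then a preserves dom D, and the commutator [D, a] defined on dom D extends to the bounded operator S on H. -/
/-!
The Leibniz identity says exactly that the continuous map `(x, y) ↦ (a x, a y + S x)` of `H × H`
sends the graph of `T` into itself. A continuous map sending a set into itself also sends its
closure into itself, and the closure of the graph of a closable operator is the graph of its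
closure; reading the identity back off the graph of `T.closure` gives the claim.
-/

open Set

namespace LinearPMap

variable {R E : Type*} [CommRing R] [AddCommGroup E] [Module R E] [TopologicalSpace E]

section Closure

variable {F : Type*} [AddCommGroup F] [Module R F] [TopologicalSpace F]
  [ContinuousAdd E] [ContinuousAdd F] [TopologicalSpace R] [ContinuousSMul R E]
  [ContinuousSMul R F]

theorem IsClosable.mapsTo_closure_graph {f : E →ₗ.[R] F} (hf : f.IsClosable)
    {B : E × F →L[R] E × F} (hB : MapsTo B f.graph f.graph) :
    MapsTo B f.closure.graph f.closure.graph := by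
  rw [← hf.graph_closure_eq_closure_graph, Submodule.topologicalClosure_coe]
  exact hB.closure B.continuous

end Closure

variable [ContinuousAdd E]

def leibnizMap (a S : E →L[R] E) : E × E →L[R] E × E :=
  (a.comp (ContinuousLinearMap.fst R E E)).prod
    (a.comp (ContinuousLinearMap.snd R E E) + S.comp (ContinuousLinearMap.fst R E E))

@[simp]
theorem leibnizMap_apply (a S : E →L[R] E) (p : E × E) :
    leibnizMap a S p = (a p.1, a p.2 + S p.1) :=
  rfl

theorem mapsTo_graph_leibnizMap_iff {f : E →ₗ.[R] E} {a S : E →L[R] E} :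
    MapsTo (leibnizMap a S) f.graph f.graph ↔
      ∃ hpres : ∀ v : f.domain, a v ∈ f.domain,
        ∀ v : f.domain, f ⟨a v, hpres v⟩ = a (f v) + S v := by
  constructor
  · intro hB
    have hmem (v : f.domain) : ((a v, a (f v) + S v) : E × E) ∈ f.graph :=
      hB (f.mem_graph v)
    exact ⟨fun v ↦ mem_domain_of_mem_graph (hmem v), fun v ↦ ((image_iff _).mpr (hmem v)).symm⟩
  · rintro ⟨hpres, hleib⟩ ⟨x, y⟩ hxy
    obtain ⟨v, rfl, rfl⟩ := (mem_graph_iff f).mp hxy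
    rw [SetLike.mem_coe, leibnizMap_apply, ← hleib v]
    exact f.mem_graph ⟨a v, hpres v⟩

end LinearPMap

theorem closure_preserved_and_bounded_commutator_general
    {H : Type*} [NormedAddCommGroup H] [InnerProductSpace ℂ H]
    (T : H →ₗ.[ℂ] H) (hclos : T.IsClosable)
    (a S : H →L[ℂ] H)
    (hpres : ∀ v : T.domain, a v ∈ T.domain)
    (hleib : ∀ v : T.domain, T ⟨a v, hpres v⟩ = a (T v) + S v) :
    ∃ hpres' : ∀ w : T.closure.domain, a w ∈ T.closure.domain,
      ∀ w : T.closure.domain, T.closure ⟨a w, hpres' w⟩ = a (T.closure w) + S w :=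
  LinearPMap.mapsTo_graph_leibnizMap_iff.mp <|
    hclos.mapsTo_closure_graph (LinearPMap.mapsTo_graph_leibnizMap_iff.mpr ⟨hpres, hleib⟩)

/-- Let `T` be a densely defined closable operator with closure
`D = T.closure`, let `a` be a bounded operator preserving `dom T`, and suppose there
is a bounded operator `S` with `T(a v) = a (T v) + S v` for all `v ∈ dom T` (a
Leibniz-type identity). Then `a` preserves `dom D`, and `D(a w) = a (D w) + S w` for
all `w ∈ dom D`; that is, the commutator `[D, a]` extends to the bounded operator
`S`. -/
theorem closure_preserved_and_bounded_commutator
    {H : Type*} [NormedAddCommGroup H] [InnerProductSpace ℂ H] [CompleteSpace H]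
    (T : H →ₗ.[ℂ] H) (hdense : Dense (T.domain : Set H)) (hclos : T.IsClosable)
    (a S : H →L[ℂ] H)
    (hpres : ∀ v : T.domain, a v ∈ T.domain)
    (hleib : ∀ v : T.domain, T ⟨a v, hpres v⟩ = a (T v) + S v) :
    ∃ hpres' : ∀ w : T.closure.domain, a w ∈ T.closure.domain,
      ∀ w : T.closure.domain, T.closure ⟨a w, hpres' w⟩ = a (T.closure w) + S w :=
  closure_preserved_and_bounded_commutator_general T hclos a S hpres hleib
end
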